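/- Let P ⊆ {1,…,n}×{1,…,n} be a sparsity pattern and let Π_P : ℂ^{n×n} → ℂ^{n×n} be the orthogonal projection that sets to zero all entries with indices outside P. Suppose in addition (to the path setup) that for every t the matrix E(t) has all entries outside P equal to zero, ‖E(t)‖_F = 1, and E solves the pattern-projected differential equation Ė = −Π_P(S) + Re⟨E, Π_P(S)⟩E, where S(t) = y y^H G^H + G^H x x^H. Then d/dt |y(t)^H x(t)| = −ε |y(t)^H x(t)| · ( ‖Π_P(S)‖_F² − (Re⟨E, Π_P(S)⟩)² ) ≤ 0; in particular t ↦ |y(t)^H x(t)| is monotonically non-increasing along solutions. -/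

import Mathlib

open Matrix

/-- Frobenius inner product `⟨A,B⟩ = trace(Aᴴ B)`. -/
noncomputable def frobInner {n : ℕ} (A B : Matrix (Fin n) (Fin n) ℂ) : ℂ :=
  (Aᴴ * B).trace

/-- Frobenius norm `‖A‖_F = √⟨A,A⟩`. -/
noncomputable def frobNorm {n : ℕ} (A : Matrix (Fin n) (Fin n) ℂ) : ℝ :=
  Real.sqrt (frobInner A A).re

/-- `G` is a group inverse of `M`. -/
def IsGroupInverse {n : ℕ} (M G : Matrix (Fin n) (Fin n) ℂ) : Prop :=
  M * G = G * M ∧ G * M * G = G ∧ M * G * M = M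

/-- The matrix `S = y yᴴ Gᴴ + Gᴴ x xᴴ`. -/
noncomputable def Smat {n : ℕ} (x y : Fin n → ℂ) (G : Matrix (Fin n) (Fin n) ℂ) :
    Matrix (Fin n) (Fin n) ℂ :=
  vecMulVec y (star y) * Gᴴ + Gᴴ * vecMulVec x (star x)

/-- The orthogonal projection onto the matrices with sparsity pattern `P`:
entries with indices outside `P` are set to zero. -/
def PiP {n : ℕ} (P : Finset (Fin n × Fin n)) (Z : Matrix (Fin n) (Fin n) ℂ) :
    Matrix (Fin n) (Fin n) ℂ :=
  Matrix.of fun i j => if (i, j) ∈ P then Z i j else 0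

/-!
Write `f = yᴴ x`. Since `G x = 0` and `yᴴ G = 0`, the eigenvector derivative formulas give
`ḟ = conj ⟨Ṁ, S⟩ · f`, hence `d/dt |f| = Re ⟨Ṁ, S⟩ · |f|`. As `E` is supported on `P`,
`⟨E, S⟩ = ⟨E, Π_P S⟩`, and substituting the ODE yields
`Re ⟨Ė, S⟩ = (Re ⟨E, Π_P S⟩)² - ‖Π_P S‖_F²`, which is `≤ 0` by Cauchy–Schwarz as `‖E‖_F = 1`.
-/

section Frobenius

variable {n : ℕ}

def frobVec (A : Matrix (Fin n) (Fin n) ℂ) : EuclideanSpace ℂ (Fin n × Fin n) :=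
  WithLp.toLp 2 fun p => A p.1 p.2

lemma frobInner_eq_sum (A B : Matrix (Fin n) (Fin n) ℂ) :
    frobInner A B = ∑ j, ∑ i, star (A i j) * B i j := by
  simp [frobInner, Matrix.trace, Matrix.mul_apply]

lemma frobInner_eq_inner (A B : Matrix (Fin n) (Fin n) ℂ) :
    frobInner A B = inner ℂ (frobVec A) (frobVec B) := by
  rw [frobInner_eq_sum, PiLp.inner_apply, Fintype.sum_prod_type, Finset.sum_comm]
  simp [frobVec, mul_comm]

lemma re_frobInner_self (A : Matrix (Fin n) (Fin n) ℂ) :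
    (frobInner A A).re = ‖frobVec A‖ ^ 2 := by
  rw [frobInner_eq_inner]
  exact inner_self_eq_norm_sq (𝕜 := ℂ) _

lemma frobNorm_eq_norm (A : Matrix (Fin n) (Fin n) ℂ) : frobNorm A = ‖frobVec A‖ := by
  rw [frobNorm, re_frobInner_self, Real.sqrt_sq (norm_nonneg _)]

lemma frobNorm_sq (A : Matrix (Fin n) (Fin n) ℂ) : frobNorm A ^ 2 = (frobInner A A).re := by
  rw [frobNorm_eq_norm, re_frobInner_self]

lemma sq_re_frobInner_le_of_frobNorm_eq_one {E : Matrix (Fin n) (Fin n) ℂ} (hE : frobNorm E = 1)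
    (B : Matrix (Fin n) (Fin n) ℂ) : (frobInner E B).re ^ 2 ≤ frobNorm B ^ 2 := by
  rw [← sq_abs, frobInner_eq_inner]
  gcongr
  calc |(inner ℂ (frobVec E) (frobVec B)).re| ≤ ‖inner ℂ (frobVec E) (frobVec B)‖ :=
        Complex.abs_re_le_norm _
    _ ≤ ‖frobVec E‖ * ‖frobVec B‖ := norm_inner_le_norm _ _
    _ = frobNorm B := by rw [← frobNorm_eq_norm, ← frobNorm_eq_norm, hE, one_mul]

lemma frobInner_add_left (A B C : Matrix (Fin n) (Fin n) ℂ) :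
    frobInner (A + B) C = frobInner A C + frobInner B C := by
  simp [frobInner, Matrix.add_mul]

lemma frobInner_neg_left (A C : Matrix (Fin n) (Fin n) ℂ) :
    frobInner (-A) C = -frobInner A C := by
  simp [frobInner]

lemma frobInner_smul_left (c : ℂ) (A C : Matrix (Fin n) (Fin n) ℂ) :
    frobInner (c • A) C = starRingEnd ℂ c * frobInner A C := by
  simp [frobInner, Matrix.trace_smul]

lemma frobInner_real_smul_left (r : ℝ) (A C : Matrix (Fin n) (Fin n) ℂ) :
    frobInner (r • A) C = r * frobInner A C := by
  rw [← Complex.coe_smul, frobInner_smul_left, Complex.conj_ofReal]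

lemma frobInner_conj_symm (A B : Matrix (Fin n) (Fin n) ℂ) :
    starRingEnd ℂ (frobInner A B) = frobInner B A := by
  have h := Matrix.trace_conjTranspose (Aᴴ * B)
  rw [Matrix.conjTranspose_mul, Matrix.conjTranspose_conjTranspose] at h
  exact h.symm

lemma frobInner_PiP_self_right (P : Finset (Fin n × Fin n)) (Z : Matrix (Fin n) (Fin n) ℂ) :
    frobInner (PiP P Z) Z = frobInner (PiP P Z) (PiP P Z) := by
  simp only [frobInner_eq_sum, PiP, Matrix.of_apply]
  refine Finset.sum_congr rfl fun j _ => Finset.sum_congr rfl fun i _ => ?_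
  split_ifs <;> simp

lemma frobInner_PiP_right_of_supported (P : Finset (Fin n × Fin n))
    {E : Matrix (Fin n) (Fin n) ℂ} (hE : ∀ i j, (i, j) ∉ P → E i j = 0)
    (Z : Matrix (Fin n) (Fin n) ℂ) :
    frobInner E (PiP P Z) = frobInner E Z := by
  simp only [frobInner_eq_sum, PiP, Matrix.of_apply]
  refine Finset.sum_congr rfl fun j _ => Finset.sum_congr rfl fun i _ => ?_
  split_ifs with h
  · rfl
  · simp [hE i j h]

lemma re_frobInner_projectedFlow (P : Finset (Fin n × Fin n))
    {E : Matrix (Fin n) (Fin n) ℂ} (hE : ∀ i j, (i, j) ∉ P → E i j = 0)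
    (S : Matrix (Fin n) (Fin n) ℂ) :
    (frobInner (-PiP P S + (frobInner E (PiP P S)).re • E) S).re
      = (frobInner E (PiP P S)).re ^ 2 - frobNorm (PiP P S) ^ 2 := by
  rw [frobInner_add_left, frobInner_neg_left, frobInner_real_smul_left,
    frobInner_PiP_self_right, ← frobInner_PiP_right_of_supported P hE S, frobNorm_sq]
  simp only [Complex.add_re, Complex.neg_re, Complex.re_ofReal_mul]
  ring

end Frobenius

section Eigenvectors

variable {n : ℕ}

lemma conj_frobInner_Smat (x y : Fin n → ℂ) (G W : Matrix (Fin n) (Fin n) ℂ) :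
    starRingEnd ℂ (frobInner W (Smat x y G))
      = star x ⬝ᵥ (G *ᵥ (W *ᵥ x)) + star y ⬝ᵥ ((W * G) *ᵥ y) := by
  have hS : (Smat x y G)ᴴ = G * vecMulVec y (star y) + vecMulVec x (star x) * G := by
    simp [Smat, Matrix.conjTranspose_vecMulVec]
  rw [frobInner_conj_symm, frobInner, hS, Matrix.add_mul, Matrix.trace_add, add_comm,
    vecMulVec_mul, vecMulVec_mul, mul_vecMulVec, vecMulVec_mul, trace_vecMulVec, trace_vecMulVec,
    dotProduct_mulVec, dotProduct_mulVec, ← mulVec_mulVec, dotProduct_mulVec,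
    dotProduct_comm x, dotProduct_comm (G *ᵥ y)]

/-- The left side is `d/dt (yᴴ x)` for the eigenvector derivatives with `Ṁ = W`. -/
lemma star_dotProduct_velocity_eq {x y x' y' : Fin n → ℂ} {G W : Matrix (Fin n) (Fin n) ℂ}
    (hGx : G *ᵥ x = 0) (hyG : star y ᵥ* G = 0)
    (hx' : x' = (star x ⬝ᵥ (G *ᵥ (W *ᵥ x))) • x - G *ᵥ (W *ᵥ x))
    (hy' : star y' = (star y ⬝ᵥ ((W * G) *ᵥ y)) • star y - star y ᵥ* (W * G)) :
    star y' ⬝ᵥ x + star y ⬝ᵥ x' = starRingEnd ℂ (frobInner W (Smat x y G)) * (star y ⬝ᵥ x) := by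
  have hyGWx : star y ⬝ᵥ (G *ᵥ (W *ᵥ x)) = 0 := by
    rw [dotProduct_mulVec, hyG, zero_dotProduct]
  have hyWGx : star y ᵥ* (W * G) ⬝ᵥ x = 0 := by
    rw [← dotProduct_mulVec, ← mulVec_mulVec, hGx, mulVec_zero, dotProduct_zero]
  rw [conj_frobInner_Smat, hx', hy', sub_dotProduct, dotProduct_sub, smul_dotProduct,
    dotProduct_smul, hyGWx, hyWGx, smul_eq_mul, smul_eq_mul]
  ring

end Eigenvectors

lemma hasDerivAt_dotProduct {ι 𝕜 𝔸 : Type*} [Fintype ι] [NontriviallyNormedField 𝕜]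
    [NormedRing 𝔸] [NormedAlgebra 𝕜 𝔸] {u v : 𝕜 → ι → 𝔸} {u' v' : ι → 𝔸} {t : 𝕜}
    (hu : ∀ i, HasDerivAt (fun s => u s i) (u' i) t)
    (hv : ∀ i, HasDerivAt (fun s => v s i) (v' i) t) :
    HasDerivAt (fun s => u s ⬝ᵥ v s) (u' ⬝ᵥ v t + u t ⬝ᵥ v') t := by
  simpa only [dotProduct, Finset.sum_add_distrib] using
    HasDerivAt.fun_sum fun i _ => (hu i).fun_mul (hv i)

lemma HasDerivAt.norm_of_eq_mul {f : ℝ → ℂ} {c : ℂ} {t : ℝ} (hf : HasDerivAt f (c * f t) t)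
    (h0 : f t ≠ 0) : HasDerivAt (fun s => ‖f s‖) (c.re * ‖f t‖) t := by
  have hpos : 0 < ‖f t‖ := norm_pos_iff.2 h0
  have h := hf.norm_sq.sqrt (by positivity)
  simp only [Real.sqrt_sq (norm_nonneg _)] at h
  convert h using 1
  rw [Complex.inner, mul_assoc, Complex.mul_conj', ← Complex.ofReal_pow,
    Complex.re_mul_ofReal]
  field_simp

theorem stmt19_general {n : ℕ} (P : Finset (Fin n × Fin n))
    (ε : ℝ) (hε : 0 < ε)
    (E E' : ℝ → Matrix (Fin n) (Fin n) ℂ)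
    (x x' y y' : ℝ → (Fin n → ℂ))
    (G : ℝ → Matrix (Fin n) (Fin n) ℂ)
    (hxdiff : ∀ t i, HasDerivAt (fun s => x s i) (x' t i) t)
    (hydiff : ∀ t i, HasDerivAt (fun s => y s i) (y' t i) t)
    (hyx : ∀ t, star (y t) ⬝ᵥ x t ≠ 0)
    (hGx : ∀ t, G t *ᵥ x t = 0)
    (hyG : ∀ t, star (y t) ᵥ* G t = 0)
    (hx' : ∀ t, x' t =
      (star (x t) ⬝ᵥ (G t *ᵥ (((ε : ℂ) • E' t) *ᵥ x t))) • x t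
        - G t *ᵥ (((ε : ℂ) • E' t) *ᵥ x t))
    (hy' : ∀ t, star (y' t) =
      (star (y t) ⬝ᵥ ((((ε : ℂ) • E' t) * G t) *ᵥ y t)) • star (y t)
        - star (y t) ᵥ* (((ε : ℂ) • E' t) * G t))
    (hpattern : ∀ t i j, (i, j) ∉ P → E t i j = 0)
    (hEnorm : ∀ t, frobNorm (E t) = 1)
    (hODE : ∀ t, E' t = -(PiP P (Smat (x t) (y t) (G t)))
        + (frobInner (E t) (PiP P (Smat (x t) (y t) (G t)))).re • E t) :
    (∀ t, HasDerivAt (fun s => ‖star (y s) ⬝ᵥ x s‖)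
        (-(ε * ‖star (y t) ⬝ᵥ x t‖) *
          (frobNorm (PiP P (Smat (x t) (y t) (G t))) ^ 2
            - (frobInner (E t) (PiP P (Smat (x t) (y t) (G t)))).re ^ 2)) t
      ∧ -(ε * ‖star (y t) ⬝ᵥ x t‖) *
          (frobNorm (PiP P (Smat (x t) (y t) (G t))) ^ 2
            - (frobInner (E t) (PiP P (Smat (x t) (y t) (G t)))).re ^ 2) ≤ 0)
    ∧ Antitone (fun t => ‖star (y t) ⬝ᵥ x t‖) := by
  have hrate : ∀ t, HasDerivAt (fun s => ‖star (y s) ⬝ᵥ x s‖)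
      (-(ε * ‖star (y t) ⬝ᵥ x t‖) *
        (frobNorm (PiP P (Smat (x t) (y t) (G t))) ^ 2
          - (frobInner (E t) (PiP P (Smat (x t) (y t) (G t)))).re ^ 2)) t := by
    intro t
    have hf := hasDerivAt_dotProduct (u := fun s => star (y s)) (u' := star (y' t))
      (fun i => (hydiff t i).star) (hxdiff t)
    rw [star_dotProduct_velocity_eq (hGx t) (hyG t) (hx' t) (hy' t)] at hf
    convert hf.norm_of_eq_mul (hyx t) using 1
    rw [Complex.conj_re, frobInner_smul_left, Complex.conj_ofReal, Complex.re_ofReal_mul, hODE t,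
      re_frobInner_projectedFlow P (hpattern t)]
    ring
  have hnonpos : ∀ t, -(ε * ‖star (y t) ⬝ᵥ x t‖) *
      (frobNorm (PiP P (Smat (x t) (y t) (G t))) ^ 2
        - (frobInner (E t) (PiP P (Smat (x t) (y t) (G t)))).re ^ 2) ≤ 0 := fun t =>
    mul_nonpos_of_nonpos_of_nonneg (neg_nonpos.2 (by positivity))
      (sub_nonneg.2 (sq_re_frobInner_le_of_frobNorm_eq_one (hEnorm t) _))
  exact ⟨fun t => ⟨hrate t, hnonpos t⟩, antitone_of_deriv_nonpos
    (fun t => (hrate t).differentiableAt) fun t => (hrate t).deriv ▸ hnonpos t⟩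

theorem stmt19 {n : ℕ} (hn : 2 ≤ n) (P : Finset (Fin n × Fin n))
    (A : Matrix (Fin n) (Fin n) ℂ) (ε : ℝ) (hε : 0 < ε)
    (E E' : ℝ → Matrix (Fin n) (Fin n) ℂ)
    (x x' y y' : ℝ → (Fin n → ℂ))
    (lam lam' : ℝ → ℂ)
    (G G' : ℝ → Matrix (Fin n) (Fin n) ℂ)
    (hEdiff : ∀ t i j, HasDerivAt (fun s => E s i j) (E' t i j) t)
    (hxdiff : ∀ t i, HasDerivAt (fun s => x s i) (x' t i) t)
    (hydiff : ∀ t i, HasDerivAt (fun s => y s i) (y' t i) t)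
    (hlamdiff : ∀ t, HasDerivAt lam (lam' t) t)
    (hGdiff : ∀ t i j, HasDerivAt (fun s => G s i j) (G' t i j) t)
    (heig : ∀ t, (A + (ε : ℂ) • E t) *ᵥ x t = lam t • x t)
    (hleig : ∀ t, star (y t) ᵥ* (A + (ε : ℂ) • E t) = lam t • star (y t))
    (hxnorm : ∀ t, star (x t) ⬝ᵥ x t = 1)
    (hynorm : ∀ t, star (y t) ⬝ᵥ y t = 1)
    (hyx : ∀ t, star (y t) ⬝ᵥ x t ≠ 0)
    (hG : ∀ t, IsGroupInverse (A + (ε : ℂ) • E t - lam t • 1) (G t))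
    (hGx : ∀ t, G t *ᵥ x t = 0)
    (hyG : ∀ t, star (y t) ᵥ* G t = 0)
    (hx' : ∀ t, x' t =
      (star (x t) ⬝ᵥ (G t *ᵥ (((ε : ℂ) • E' t) *ᵥ x t))) • x t
        - G t *ᵥ (((ε : ℂ) • E' t) *ᵥ x t))
    (hy' : ∀ t, star (y' t) =
      (star (y t) ⬝ᵥ ((((ε : ℂ) • E' t) * G t) *ᵥ y t)) • star (y t)
        - star (y t) ᵥ* (((ε : ℂ) • E' t) * G t))
    (hpattern : ∀ t i j, (i, j) ∉ P → E t i j = 0)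
    (hEnorm : ∀ t, frobNorm (E t) = 1)
    (hODE : ∀ t, E' t = -(PiP P (Smat (x t) (y t) (G t)))
        + (frobInner (E t) (PiP P (Smat (x t) (y t) (G t)))).re • E t) :
    (∀ t, HasDerivAt (fun s => ‖star (y s) ⬝ᵥ x s‖)
        (-(ε * ‖star (y t) ⬝ᵥ x t‖) *
          (frobNorm (PiP P (Smat (x t) (y t) (G t))) ^ 2
            - (frobInner (E t) (PiP P (Smat (x t) (y t) (G t)))).re ^ 2)) t
      ∧ -(ε * ‖star (y t) ⬝ᵥ x t‖) *
          (frobNorm (PiP P (Smat (x t) (y t) (G t))) ^ 2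
            - (frobInner (E t) (PiP P (Smat (x t) (y t) (G t)))).re ^ 2) ≤ 0)
    ∧ Antitone (fun t => ‖star (y t) ⬝ᵥ x t‖) :=
  stmt19_general P ε hε E E' x x' y y' G hxdiff hydiff hyx hGx hyG hx' hy' hpattern hEnorm hODE
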